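/- arXiv:1808.00989 — 4 statements merged into one kernel-verified Lean document; each statement's English description precedes it below -/
import Mathlib

section
/- Let f : ℝⁿ → ℝ be convex, C ⊆ ℝⁿ nonempty closed convex with argmin of f over C nonempty, a ∈ argmin_{C} f, and let φ : [0,∞) → ℝⁿ be absolutely continuous with φ(t) ∈ C for all t and φ'(t) ∈ −(∂f(φ(t)) + N_C(φ(t))) for a.e. t. Then d/dt (½‖φ(t)−a‖²) ≤ min_{x∈C} f(x) − f(φ(t)) ≤ 0 for a.e. t; in particular t ↦ ‖φ(t) − a‖ is nonincreasing. -/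
open Set Pointwise MeasureTheory intervalIntegral
open scoped RealInnerProductSpace

/-- Convex subdifferential of a real-valued function. -/
def subdiff {n : ℕ} (f : EuclideanSpace ℝ (Fin n) → ℝ) (x : EuclideanSpace ℝ (Fin n)) :
    Set (EuclideanSpace ℝ (Fin n)) :=
  {y | ∀ x', f x + ⟪y, x' - x⟫ ≤ f x'}

/-- Normal cone to a set. -/
def normalCone {n : ℕ} (C : Set (EuclideanSpace ℝ (Fin n))) (x : EuclideanSpace ℝ (Fin n)) :
    Set (EuclideanSpace ℝ (Fin n)) :=
  {v | ∀ x' ∈ C, ⟪v, x' - x⟫ ≤ 0}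

/-!
Along the trajectory, the subgradient inequality and the normal-cone inequality, both tested at
the minimiser `a`, give `⟪φ - a, φ'⟫ ≤ f a - f φ ≤ 0` almost everywhere. Since `φ` is absolutely
continuous, so is `‖φ - a‖²`, with derivative `2 ⟪φ - a, φ'⟫` almost everywhere; the fundamental
theorem of calculus for absolutely continuous functions turns the a.e. sign of this derivative
into monotonicity of `‖φ - a‖`.
-/

namespace AbsolutelyContinuousOnInterval

theorem of_dist_le_mul {X Y : Type*} [PseudoMetricSpace X] [PseudoMetricSpace Y]
    {f : ℝ → X} {g : ℝ → Y} {a b K : ℝ} (hg : AbsolutelyContinuousOnInterval g a b)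
    (hfg : ∀ x ∈ uIcc a b, ∀ y ∈ uIcc a b, dist (f x) (f y) ≤ K * dist (g x) (g y)) :
    AbsolutelyContinuousOnInterval f a b := by
  unfold AbsolutelyContinuousOnInterval at hg
  refine squeeze_zero' (.of_forall fun _ ↦ Finset.sum_nonneg fun _ _ ↦ dist_nonneg) ?_
    (by simpa using hg.const_mul K)
  rw [Filter.eventually_inf_principal]
  filter_upwards with E hE
  rw [Finset.mul_sum]
  exact Finset.sum_le_sum fun i hi ↦ hfg _ (hE.1 i hi).1 _ (hE.1 i hi).2

theorem norm_sq {F : Type*} [SeminormedAddCommGroup F] {f : ℝ → F} {a b : ℝ}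
    (hf : AbsolutelyContinuousOnInterval f a b) :
    AbsolutelyContinuousOnInterval (‖f ·‖ ^ 2) a b := by
  obtain ⟨M, hM⟩ := hf.exists_bound
  refine hf.of_dist_le_mul (K := 2 * M) fun x hx y hy ↦ ?_
  have hxy : |‖f x‖ - ‖f y‖| ≤ ‖f x - f y‖ := abs_norm_sub_norm_le _ _
  calc dist (‖f x‖ ^ 2) (‖f y‖ ^ 2) = |‖f x‖ - ‖f y‖| * (‖f x‖ + ‖f y‖) := by
        rw [Real.dist_eq, sq_sub_sq, abs_mul, mul_comm,
          abs_of_nonneg (by positivity : 0 ≤ ‖f x‖ + ‖f y‖)]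
    _ ≤ ‖f x - f y‖ * (M + M) := by
        gcongr
        exacts [hM x hx, hM y hy]
    _ = 2 * M * dist (f x) (f y) := by rw [dist_eq_norm]; ring

end AbsolutelyContinuousOnInterval

theorem IntervalIntegrable.absolutelyContinuousOnInterval_intervalIntegral'
    {E : Type*} [NormedAddCommGroup E] [NormedSpace ℝ E] {f : ℝ → E}
    {a b c : ℝ} (hf : IntervalIntegrable f volume a b) (hc : c ∈ uIcc a b) :
    AbsolutelyContinuousOnInterval (fun x ↦ ∫ v in c..x, f v) a b := by
  have hsub {x y : ℝ} (hx : x ∈ uIcc a b) (hy : y ∈ uIcc a b) : IntervalIntegrable f volume x y :=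
    hf.mono_set (uIcc_subset_uIcc hx hy)
  refine (hf.norm.absolutelyContinuousOnInterval_intervalIntegral hc).of_dist_le_mul (K := 1)
    fun x hx y hy ↦ ?_
  rw [one_mul, dist_eq_norm, norm_sub_rev, Real.dist_eq, abs_sub_comm,
    integral_interval_sub_left (hsub hc hy) (hsub hc hx),
    integral_interval_sub_left (hsub hc hy).norm (hsub hc hx).norm]
  exact norm_integral_le_abs_integral_norm

theorem norm_sq_sub_norm_sq_eq_integral_inner {E : Type*} [NormedAddCommGroup E]
    [InnerProductSpace ℝ E] [CompleteSpace E] {φ φ' : ℝ → E} {s t : ℝ}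
    (hφ' : IntervalIntegrable φ' volume s t)
    (hφ : ∀ u ∈ uIcc s t, φ u = φ s + ∫ v in s..u, φ' v) :
    ‖φ t‖ ^ 2 - ‖φ s‖ ^ 2 = ∫ u in s..t, 2 * ⟪φ u, φ' u⟫ := by
  set Φ : ℝ → E := fun u ↦ φ s + ∫ v in s..u, φ' v
  have hconst : AbsolutelyContinuousOnInterval (fun _ ↦ φ s) s t :=
    ((LipschitzWith.const (φ s)).lipschitzOnWith (s := uIcc s t)).absolutelyContinuousOnInterval
  have hΦ_ac : AbsolutelyContinuousOnInterval (‖Φ ·‖ ^ 2) s t :=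
    (hconst.add (hφ'.absolutelyContinuousOnInterval_intervalIntegral' left_mem_uIcc)).norm_sq
  have hΦ_deriv : ∀ᵐ u, u ∈ uIoc s t → deriv (‖Φ ·‖ ^ 2) u = 2 * ⟪φ u, φ' u⟫ := by
    filter_upwards [hφ'.ae_hasDerivAt_integral] with u hu hus
    have hu' := uIoc_subset_uIcc hus
    rw [hφ u hu']
    exact ((hu hu' s left_mem_uIcc).const_add (φ s)).norm_sq.deriv
  calc ‖φ t‖ ^ 2 - ‖φ s‖ ^ 2 = ‖Φ t‖ ^ 2 - ‖Φ s‖ ^ 2 := by simp [Φ, hφ t right_mem_uIcc]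
    _ = ∫ u in s..t, deriv (‖Φ ·‖ ^ 2) u := hΦ_ac.integral_deriv_eq_sub.symm
    _ = ∫ u in s..t, 2 * ⟪φ u, φ' u⟫ := integral_congr_ae hΦ_deriv

theorem antitoneOn_norm_sub_of_ae_inner_nonpos {E : Type*} [NormedAddCommGroup E]
    [InnerProductSpace ℝ E] [CompleteSpace E] {φ φ' : ℝ → E} {a : E}
    (hφ' : ∀ T : ℝ, IntervalIntegrable φ' volume 0 T)
    (hφ : ∀ t ∈ Ici (0 : ℝ), φ t = φ 0 + ∫ s in (0 : ℝ)..t, φ' s)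
    (hinner : ∀ᵐ t, t ∈ Ici (0 : ℝ) → ⟪φ t - a, φ' t⟫ ≤ 0) :
    AntitoneOn (fun t ↦ ‖φ t - a‖) (Ici 0) := by
  intro s hs t ht hst
  have hφ'_st : IntervalIntegrable φ' volume s t := (hφ' s).symm.trans (hφ' t)
  have hφ_st : ∀ u ∈ uIcc s t, φ u - a = (φ s - a) + ∫ v in s..u, φ' v := by
    intro u hu
    rw [uIcc_of_le hst] at hu
    rw [hφ u (mem_Ici.2 (le_trans hs hu.1)), hφ s hs,
      ← integral_interval_sub_left (hφ' u) (hφ' s)]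
    abel
  have hintegral_nonpos : ∫ u in s..t, 2 * ⟪φ u - a, φ' u⟫ ≤ 0 := by
    rw [integral_of_le hst]
    refine setIntegral_nonpos_of_ae_restrict ?_
    filter_upwards [ae_restrict_of_ae hinner, ae_restrict_mem measurableSet_Ioc] with u hu hus
    have := hu (mem_Ici.2 (le_trans hs hus.1.le))
    simp only [Pi.zero_apply]
    linarith
  have hsq := norm_sq_sub_norm_sq_eq_integral_inner hφ'_st hφ_st
  refine (pow_le_pow_iff_left₀ (norm_nonneg _) (norm_nonneg _) two_ne_zero).1 ?_
  linarith

theorem inner_sub_le_sub_of_neg_mem_subdiff_add_normalCone {n : ℕ}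
    {f : EuclideanSpace ℝ (Fin n) → ℝ} {C : Set (EuclideanSpace ℝ (Fin n))}
    {a x v : EuclideanSpace ℝ (Fin n)} (ha : a ∈ C)
    (hv : -v ∈ subdiff f x + normalCone C x) :
    ⟪x - a, v⟫ ≤ f a - f x := by
  obtain ⟨g, hg, ν, hν, hsum⟩ := hv
  have hv : v = -(g + ν) := neg_eq_iff_eq_neg.1 hsum.symm
  calc ⟪x - a, v⟫ = ⟪g, a - x⟫ + ⟪ν, a - x⟫ := by
        rw [hv, inner_neg_right, ← inner_neg_left, neg_sub, real_inner_comm, inner_add_left]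
    _ ≤ f a - f x := by linarith [hg a, hν a ha]

theorem stmt1_general {n : ℕ}
    (f : EuclideanSpace ℝ (Fin n) → ℝ)
    (C : Set (EuclideanSpace ℝ (Fin n)))
    (a : EuclideanSpace ℝ (Fin n)) (haC : a ∈ C) (hamin : ∀ x ∈ C, f a ≤ f x)
    (φ φ' : ℝ → EuclideanSpace ℝ (Fin n))
    -- φ is locally absolutely continuous with a.e. derivative φ'
    (hint : ∀ T : ℝ, IntervalIntegrable φ' volume 0 T)
    (hFTC : ∀ t ∈ Ici (0:ℝ), φ t = φ 0 + ∫ s in (0:ℝ)..t, φ' s)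
    (hmem : ∀ t ∈ Ici (0:ℝ), φ t ∈ C)
    -- the differential inclusion φ'(t) ∈ -(∂f(φ(t)) + N_C(φ(t))) a.e.
    (hincl : ∀ᵐ t ∂volume, t ∈ Ici (0:ℝ) →
      -φ' t ∈ subdiff f (φ t) + normalCone C (φ t)) :
    (∀ᵐ t ∂volume, t ∈ Ici (0:ℝ) →
      ⟪φ t - a, φ' t⟫ ≤ f a - f (φ t) ∧ f a - f (φ t) ≤ 0) ∧
    AntitoneOn (fun t => ‖φ t - a‖) (Ici 0) := by
  have hdescent : ∀ᵐ t ∂volume, t ∈ Ici (0:ℝ) →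
      ⟪φ t - a, φ' t⟫ ≤ f a - f (φ t) ∧ f a - f (φ t) ≤ 0 := by
    filter_upwards [hincl] with t ht ht0
    exact ⟨inner_sub_le_sub_of_neg_mem_subdiff_add_normalCone haC (ht ht0),
      sub_nonpos.2 (hamin _ (hmem t ht0))⟩
  refine ⟨hdescent, antitoneOn_norm_sub_of_ae_inner_nonpos hint hFTC ?_⟩
  filter_upwards [hdescent] with t ht ht0
  exact (ht ht0).1.trans (ht ht0).2

theorem stmt1 {n : ℕ}
    (f : EuclideanSpace ℝ (Fin n) → ℝ) (hf : ConvexOn ℝ univ f)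
    (C : Set (EuclideanSpace ℝ (Fin n))) (hCne : C.Nonempty) (hCcl : IsClosed C)
    (hCcv : Convex ℝ C)
    (a : EuclideanSpace ℝ (Fin n)) (haC : a ∈ C) (hamin : ∀ x ∈ C, f a ≤ f x)
    (φ φ' : ℝ → EuclideanSpace ℝ (Fin n))
    -- φ is locally absolutely continuous with a.e. derivative φ'
    (hint : ∀ T : ℝ, IntervalIntegrable φ' volume 0 T)
    (hFTC : ∀ t ∈ Ici (0:ℝ), φ t = φ 0 + ∫ s in (0:ℝ)..t, φ' s)
    (hmem : ∀ t ∈ Ici (0:ℝ), φ t ∈ C)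
    -- the differential inclusion φ'(t) ∈ -(∂f(φ(t)) + N_C(φ(t))) a.e.
    (hincl : ∀ᵐ t ∂volume, t ∈ Ici (0:ℝ) →
      -φ' t ∈ subdiff f (φ t) + normalCone C (φ t)) :
    (∀ᵐ t ∂volume, t ∈ Ici (0:ℝ) →
      ⟪φ t - a, φ' t⟫ ≤ f a - f (φ t) ∧ f a - f (φ t) ≤ 0) ∧
    AntitoneOn (fun t => ‖φ t - a‖) (Ici 0) :=
  stmt1_general f C a haC hamin φ φ' hint hFTC hmem hincl
end

section
/- Let g_i : ℝᵐ → ℝ be convex (i = 1,…,k) with D := ⋂_i argmin g_i ≠ ∅, and let f(x) = Σ_{i=1}^k g_i(x_i) + (1/4) Σ_{i,j=1}^k a_{ij} ‖x_i − x_j‖², where a_{ij} = a_{ji} ≥ 0 and the graph {(i,j) : a_{ij} > 0} is connected. Then argmin f = {(ξ, ξ, …, ξ) : ξ ∈ D}. -/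
open Set Finset

theorem stmt7 {k m : ℕ}
    (g : Fin k → EuclideanSpace ℝ (Fin m) → ℝ)
    (hg : ∀ i, ConvexOn ℝ univ (g i))
    (D : Set (EuclideanSpace ℝ (Fin m)))
    (hD : D = ⋂ i : Fin k, {ξ | IsMinOn (g i) univ ξ})
    (hDne : D.Nonempty)
    (a : Fin k → Fin k → ℝ)
    (hsym : ∀ i j, a i j = a j i) (hnn : ∀ i j, 0 ≤ a i j)
    (hconn : ∀ i j : Fin k, ∃ (L : ℕ) (c : ℕ → Fin k), c 0 = i ∧ c L = j ∧
        ∀ l < L, 0 < a (c l) (c (l+1)))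
    (f : (Fin k → EuclideanSpace ℝ (Fin m)) → ℝ)
    (hf : ∀ x, f x = (∑ i, g i (x i)) + (1/4) * ∑ i, ∑ j, a i j * ‖x i - x j‖^2) :
    {x : Fin k → EuclideanSpace ℝ (Fin m) | IsMinOn f univ x} =
      {x | ∃ ξ ∈ D, ∀ i, x i = ξ} := by
  obtain ⟨ξ₀, hξ₀mem⟩ := hDne
  have hξ₀ : ∀ i y, g i ξ₀ ≤ g i y := by
    intro i y
    have := hD ▸ hξ₀mem
    rw [mem_iInter] at this
    exact isMinOn_univ_iff.mp (this i) y
  have hQ : ∀ x : Fin k → EuclideanSpace ℝ (Fin m),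
      0 ≤ ∑ i, ∑ j, a i j * ‖x i - x j‖^2 := fun x =>
    Finset.sum_nonneg fun i _ => Finset.sum_nonneg fun j _ =>
      mul_nonneg (hnn i j) (sq_nonneg _)
  ext x
  simp only [mem_setOf_eq, isMinOn_univ_iff]
  constructor
  · intro hx
    have h1 : f x ≤ ∑ i, g i ξ₀ := by
      have h := hx (fun _ => ξ₀)
      have hc := hf (fun _ => ξ₀)
      simp only [sub_self, norm_zero] at hc
      simp only [ne_eq, OfNat.ofNat_ne_zero, not_false_eq_true, zero_pow, mul_zero,
        Finset.sum_const_zero, mul_zero, add_zero] at hc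
      rw [hc] at h
      exact h
    have h2 : ∑ i, g i ξ₀ ≤ ∑ i, g i (x i) :=
      Finset.sum_le_sum fun i _ => hξ₀ i (x i)
    have hfx := hf x
    have hQx := hQ x
    have hQ0 : ∑ i, ∑ j, a i j * ‖x i - x j‖^2 = 0 := by linarith
    have hsum : ∑ i, g i ξ₀ = ∑ i, g i (x i) := by linarith
    have hterm : ∀ i, g i ξ₀ = g i (x i) := by
      have := (Finset.sum_eq_sum_iff_of_le (fun i _ => hξ₀ i (x i))).mp hsum
      exact fun i => this i (Finset.mem_univ i)
    have hadj : ∀ i j, 0 < a i j → x i = x j := by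
      intro i j hpos
      have h1 := (Finset.sum_eq_zero_iff_of_nonneg (fun i _ =>
        Finset.sum_nonneg fun j _ => mul_nonneg (hnn i j) (sq_nonneg _))).mp hQ0
        i (Finset.mem_univ i)
      have h2 := (Finset.sum_eq_zero_iff_of_nonneg (fun j _ =>
        mul_nonneg (hnn i j) (sq_nonneg _))).mp h1 j (Finset.mem_univ j)
      have h3 : ‖x i - x j‖ ^ 2 = 0 := by
        rcases mul_eq_zero.mp h2 with h | h
        · exact absurd h (ne_of_gt hpos)
        · exact h
      have : x i - x j = 0 := by
        simpa using pow_eq_zero_iff (n := 2) (by norm_num) |>.mp h3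
      exact sub_eq_zero.mp this
    rcases isEmpty_or_nonempty (Fin k) with hk | hk
    · exact ⟨ξ₀, hξ₀mem, fun i => (hk.false i).elim⟩
    · obtain ⟨i₀⟩ := hk
      have hall : ∀ i, x i = x i₀ := by
        intro i
        obtain ⟨L, c, hc0, hcL, hstep⟩ := hconn i i₀
        have key : ∀ l, l ≤ L → x (c 0) = x (c l) := by
          intro l hl
          induction l with
          | zero => rfl
          | succ n ih =>
            rw [ih (Nat.le_of_succ_le hl)]
            exact hadj _ _ (hstep n hl)
        calc x i = x (c 0) := by rw [hc0]
          _ = x (c L) := key L le_rfl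
          _ = x i₀ := by rw [hcL]
      refine ⟨x i₀, ?_, hall⟩
      rw [hD, mem_iInter]
      intro i
      rw [mem_setOf_eq, isMinOn_univ_iff]
      intro y
      calc g i (x i₀) = g i (x i) := by rw [hall i]
        _ = g i ξ₀ := (hterm i).symm
        _ ≤ g i y := hξ₀ i y
  · rintro ⟨ξ, hξ, hxξ⟩ y
    have hξ' : ∀ i z, g i ξ ≤ g i z := by
      intro i z
      have := hD ▸ hξ
      rw [mem_iInter] at this
      exact isMinOn_univ_iff.mp (this i) z
    rw [hf, hf]
    have hx1 : ∑ i, g i (x i) = ∑ i, g i ξ := by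
      apply Finset.sum_congr rfl
      intro i _
      rw [hxξ i]
    have hx2 : ∑ i, ∑ j, a i j * ‖x i - x j‖^2 = 0 := by
      apply Finset.sum_eq_zero
      intro i _
      apply Finset.sum_eq_zero
      intro j _
      rw [hxξ i, hxξ j, sub_self]
      simp
    have h2 : ∑ i, g i ξ ≤ ∑ i, g i (y i) :=
      Finset.sum_le_sum fun i _ => hξ' i (y i)
    have := hQ y
    rw [hx1, hx2]
    linarith
end

section
/- Let Q = {1,…,p}, σ : [0,∞) → Q a piecewise-constant switching signal, V : ℝⁿ → ℝ differentiable and bounded below, W_q : ℝⁿ → [0,∞) lower semicontinuous, and φ : [0,∞) → ℝⁿ bounded and locally absolutely continuous with d/dt V(φ(t)) ≤ −W_{σ(t)}(φ(t)) for a.e. t. Fix q ∈ Q and suppose the set T_q = {t : σ(t) = q} has infinite Lebesgue measure. Then there exists a sequence t_j ∈ T_q with t_j → ∞ and W_q(φ(t_j)) → 0. -/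
/-!
Along the solution, `∫₀ᵗ -(V ∘ φ)' = V (φ 0) - V (φ t)` stays below `V (φ 0) - inf V`, and
`-(V ∘ φ)' ≥ 0`, so `-(V ∘ φ)'` is integrable on `(0, ∞)`. On `T_q` it dominates `W_q ∘ φ`. If
`W_q ∘ φ ≥ ε` on `T_q ∩ (T, ∞)`, this set, which still has infinite measure, would lie
(up to a null set) in `{ε ≤ -(V ∘ φ)'}`, a set of finite measure by Markov's inequality.
-/

open Set MeasureTheory Filter Topology
open scoped ENNReal

theorem measure_inter_Ioi_eq_top {α : Type*} [LinearOrder α] [TopologicalSpace α]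
    [CompactIccSpace α] [MeasurableSpace α] {μ : Measure α} [IsFiniteMeasureOnCompacts μ]
    {S : Set α} (hS : μ S = ∞) (hSb : BddBelow S) (M : α) : μ (S ∩ Ioi M) = ∞ := by
  obtain ⟨b, hb⟩ := hSb
  have hcover : S ⊆ (S ∩ Ioi M) ∪ Icc b M := fun t ht =>
    (le_or_gt t M).elim (fun h => Or.inr ⟨hb ht, h⟩) (fun h => Or.inl ⟨ht, h⟩)
  by_contra hfin
  have hlt : μ (S ∩ Ioi M) + μ (Icc b M) < ∞ :=
    ENNReal.add_lt_top.2 ⟨lt_top_iff_ne_top.2 hfin, isCompact_Icc.measure_lt_top⟩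
  exact (hS ▸ (measure_mono hcover).trans (measure_union_le _ _)).not_gt hlt

theorem exists_mem_lt_of_measure_eq_top {α : Type*} [MeasurableSpace α] {μ : Measure α}
    {f g : α → ℝ} {S : Set α} {ε : ℝ} (hg : Integrable g μ)
    (hfg : ∀ᵐ x ∂μ, x ∈ S → f x ≤ g x) (hS : μ S = ∞) (hε : 0 < ε) :
    ∃ x ∈ S, f x < ε := by
  by_contra! hcon
  have hsub : μ S ≤ μ {x | ε ≤ ‖g x‖} :=
    measure_mono_ae <| hfg.mono fun x hx (hxS : x ∈ S) =>
      (hcon x hxS).trans ((hx hxS).trans (Real.le_norm_self _))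
  exact (hg.measure_norm_ge_lt_top hε).ne (top_le_iff.1 (hS ▸ hsub))

theorem exists_mem_gt_lt_of_integrableOn_Ioi {f g : ℝ → ℝ} {S : Set ℝ} {a ε : ℝ}
    (hg : IntegrableOn g (Ioi a)) (hfg : ∀ᵐ t, t ∈ S → f t ≤ g t) (hS : volume S = ∞)
    (hSb : BddBelow S) (hε : 0 < ε) (T : ℝ) : ∃ t ∈ S, T < t ∧ f t < ε := by
  have htail : volume.restrict (Ioi a) (S ∩ Ioi (max T a)) = ∞ := by
    rw [Measure.restrict_apply' measurableSet_Ioi,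
      inter_eq_left.2 (inter_subset_right.trans (Ioi_subset_Ioi (le_max_right T a)))]
    exact measure_inter_Ioi_eq_top hS hSb _
  obtain ⟨t, ⟨htS, htT⟩, hft⟩ := exists_mem_lt_of_measure_eq_top hg
    (ae_restrict_of_ae (hfg.mono fun t h ht => h ht.1)) htail hε
  exact ⟨t, htS, (le_max_left T a).trans_lt htT, hft⟩

theorem integrableOn_Ioi_of_nonneg_of_intervalIntegral_le {g : ℝ → ℝ} {a C : ℝ}
    (hint : ∀ t, IntervalIntegrable g volume a t) (hnn : ∀ᵐ t, a < t → 0 ≤ g t)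
    (hC : ∀ t, a ≤ t → ∫ s in a..t, g s ≤ C) : IntegrableOn g (Ioi a) := by
  refine integrableOn_Ioi_of_intervalIntegral_norm_bounded C a (fun t => (hint t).1)
    tendsto_id (eventually_ge_atTop a |>.mono fun t hat => ?_)
  have hnorm : ∫ s in a..t, ‖g s‖ = ∫ s in a..t, g s :=
    intervalIntegral.integral_congr_ae <| hnn.mono fun s hs hsI => by
      rw [uIoc_of_le hat] at hsI
      exact Real.norm_of_nonneg (hs hsI.1)
  exact hnorm ▸ hC t hat

theorem exists_seq_mem_tendsto_atTop_tendsto_zero {S : Set ℝ} {f : ℝ → ℝ}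
    (hf : ∀ t ∈ S, 0 ≤ f t) (h : ∀ ε > 0, ∀ T, ∃ t ∈ S, T < t ∧ f t < ε) :
    ∃ u : ℕ → ℝ, (∀ j, u j ∈ S) ∧ Tendsto u atTop atTop ∧ Tendsto (f ∘ u) atTop (𝓝 0) := by
  choose u huS huT hfu using fun j : ℕ => h (1 / ((j : ℝ) + 1)) (by positivity) j
  refine ⟨u, huS, tendsto_atTop_mono (fun j => (huT j).le) tendsto_natCast_atTop_atTop, ?_⟩
  exact squeeze_zero (fun j => hf _ (huS j)) (fun j => (hfu j).le)
    tendsto_one_div_add_atTop_nhds_zero_nat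

theorem stmt9_general {n p : ℕ}
    (σ : ℝ → Fin p)
    (V : EuclideanSpace ℝ (Fin n) → ℝ)
    (hVb : ∃ c, ∀ x, c ≤ V x)
    (W : Fin p → EuclideanSpace ℝ (Fin n) → ℝ)
    (hWnn : ∀ q x, 0 ≤ W q x)
    (φ : ℝ → EuclideanSpace ℝ (Fin n))
    -- V ∘ φ is locally absolutely continuous with a.e. derivative h
    (h : ℝ → ℝ)
    (hloc : ∀ T : ℝ, IntervalIntegrable h volume 0 T)
    (hFTC : ∀ t ∈ Ici (0:ℝ), V (φ t) = V (φ 0) + ∫ s in (0:ℝ)..t, h s)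
    -- d/dt V(φ(t)) ≤ -W_{σ(t)}(φ(t)) a.e.
    (hineq : ∀ᵐ t ∂volume, t ∈ Ici (0:ℝ) → h t ≤ -(W (σ t) (φ t)))
    (q : Fin p)
    -- T_q = {t : σ(t) = q} has infinite measure
    (hq : volume {t : ℝ | 0 ≤ t ∧ σ t = q} = ⊤) :
    ∃ t : ℕ → ℝ, (∀ j, 0 ≤ t j ∧ σ (t j) = q) ∧
      Tendsto t atTop atTop ∧
      Tendsto (fun j => W q (φ (t j))) atTop (nhds 0) := by
  obtain ⟨c, hc⟩ := hVb
  have hdecay : IntegrableOn (fun s => -h s) (Ioi 0) := by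
    refine integrableOn_Ioi_of_nonneg_of_intervalIntegral_le (C := V (φ 0) - c)
      (fun t => (hloc t).neg) (hineq.mono fun t ht ht0 => ?_) fun t ht => ?_
    · linarith [ht (le_of_lt ht0), hWnn (σ t) (φ t)]
    · rw [intervalIntegral.integral_neg]
      linarith [hFTC t ht, hc (φ t)]
  have hdom : ∀ᵐ t, t ∈ {t : ℝ | 0 ≤ t ∧ σ t = q} → W q (φ t) ≤ -h t :=
    hineq.mono fun t ht ⟨ht0, hσt⟩ => by linarith [hσt ▸ ht ht0]
  exact exists_seq_mem_tendsto_atTop_tendsto_zero (fun t _ => hWnn q (φ t))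
    fun ε hε => exists_mem_gt_lt_of_integrableOn_Ioi hdecay hdom hq ⟨0, fun _ ht => ht.1⟩ hε

theorem stmt9 {n p : ℕ}
    (σ : ℝ → Fin p)
    -- σ is a piecewise-constant switching signal
    (hσ : ∃ τ : ℕ → ℝ, τ 0 = 0 ∧ StrictMono τ ∧ Tendsto τ atTop atTop ∧
          ∀ j : ℕ, ∀ s ∈ Ico (τ j) (τ (j+1)), σ s = σ (τ j))
    (V : EuclideanSpace ℝ (Fin n) → ℝ)
    (hV : Differentiable ℝ V) (hVb : ∃ c, ∀ x, c ≤ V x)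
    (W : Fin p → EuclideanSpace ℝ (Fin n) → ℝ)
    (hWlsc : ∀ q, LowerSemicontinuous (W q)) (hWnn : ∀ q x, 0 ≤ W q x)
    (φ φ' : ℝ → EuclideanSpace ℝ (Fin n))
    -- φ bounded, locally absolutely continuous with a.e. derivative φ'
    (hφb : ∃ R, ∀ t ∈ Ici (0:ℝ), ‖φ t‖ ≤ R)
    (hφint : ∀ T : ℝ, IntervalIntegrable φ' volume 0 T)
    (hφFTC : ∀ t ∈ Ici (0:ℝ), φ t = φ 0 + ∫ s in (0:ℝ)..t, φ' s)
    -- V ∘ φ is locally absolutely continuous with a.e. derivative h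
    (h : ℝ → ℝ)
    (hloc : ∀ T : ℝ, IntervalIntegrable h volume 0 T)
    (hFTC : ∀ t ∈ Ici (0:ℝ), V (φ t) = V (φ 0) + ∫ s in (0:ℝ)..t, h s)
    -- d/dt V(φ(t)) ≤ -W_{σ(t)}(φ(t)) a.e.
    (hineq : ∀ᵐ t ∂volume, t ∈ Ici (0:ℝ) → h t ≤ -(W (σ t) (φ t)))
    (q : Fin p)
    -- T_q = {t : σ(t) = q} has infinite measure
    (hq : volume {t : ℝ | 0 ≤ t ∧ σ t = q} = ⊤) :
    ∃ t : ℕ → ℝ, (∀ j, 0 ≤ t j ∧ σ (t j) = q) ∧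
      Tendsto t atTop atTop ∧
      Tendsto (fun j => W q (φ (t j))) atTop (nhds 0) :=
  stmt9_general σ V hVb W hWnn φ h hloc hFTC hineq q hq
end

section
/- Let Q = {1,…,p} and for each q let f_q : ℝⁿ → ℝ be convex with A := ⋂_{q} argmin f_q ≠ ∅. Then every a ∈ A is Lyapunov stable for the switched subgradient inclusion ẋ ∈ −∂f_{σ(t)}(x), for every switching signal σ: namely, for every solution φ and every a ∈ A, t ↦ ‖φ(t) − a‖ is nonincreasing, hence ‖φ(t) − a‖ ≤ ‖φ(0) − a‖ for all t. -/
/-!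
Whichever mode `σ u` is active, the subgradient inequality at the common minimiser `a` gives
`⟪φ' u, φ u - a⟫ ≤ f_{σ u} a - f_{σ u} (φ u) ≤ 0` for a.e. `u`. Integrating the chain rule
`d/du ‖φ u - a‖² = 2 ⟪φ' u, φ u - a⟫` over `[s, t]` then shows `‖φ t - a‖ ≤ ‖φ s - a‖`.
Since `φ` is only an integral of `φ'`, the chain rule is proved in integrated form: for any
integrable `g`, Fubini on the triangle `s < u < v ≤ t` gives
`2 ∫ ⟪g u, ∫_{(s,u]} g⟫ du = ‖∫_{(s,t]} g‖²`.
-/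

open Set MeasureTheory Filter
open scoped RealInnerProductSpace

section Primitive

variable {E : Type*} [NormedAddCommGroup E] [InnerProductSpace ℝ E]
  {g : ℝ → E} {s t : ℝ}

theorem integrableOn_inner_primitive (hg : IntegrableOn g (Ioc s t)) :
    IntegrableOn (fun u => ⟪g u, ∫ v in Ioc s u, g v⟫) (Ioc s t) := by
  have hG : ContinuousOn (fun u => ∫ v in Ioc s u, g v) (Icc s t) :=
    intervalIntegral.continuousOn_primitive ((integrableOn_Icc_iff_integrableOn_Ioc).mpr hg)
  obtain ⟨C, hC⟩ := isCompact_Icc.exists_bound_of_continuousOn hG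
  refine Integrable.mono' (hg.norm.mul_const C)
    (hg.aestronglyMeasurable.inner
      ((hG.mono Ioc_subset_Icc_self).aestronglyMeasurable measurableSet_Ioc)) ?_
  filter_upwards [ae_restrict_mem measurableSet_Ioc] with u hu
  exact (norm_inner_le_norm _ _).trans
    (mul_le_mul_of_nonneg_left (hC u (Ioc_subset_Icc_self hu)) (norm_nonneg _))

theorem two_mul_integral_inner_primitive [CompleteSpace E] (hg : IntegrableOn g (Ioc s t)) :
    2 * ∫ u in Ioc s t, ⟪g u, ∫ v in Ioc s u, g v⟫ = ‖∫ u in Ioc s t, g u‖ ^ 2 := by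
  set μ := volume.restrict (Ioc s t)
  set Δ := ∫ u in Ioc s t, g u
  -- Both sides are integrals over the triangle `{u < v}` of `⟪g u, g v⟫`, computed in two orders.
  set F : ℝ × ℝ → ℝ := {q : ℝ × ℝ | q.1 < q.2}.indicator fun q => ⟪g q.1, g q.2⟫
  have hF : Integrable F (μ.prod μ) := by
    refine Integrable.mono' (hg.norm.mul_prod hg.norm)
      ((hg.aestronglyMeasurable.comp_fst.inner (𝕜 := ℝ) hg.aestronglyMeasurable.comp_snd).indicator
        (measurableSet_lt measurable_fst measurable_snd)) (Eventually.of_forall fun q => ?_)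
    by_cases hq : q.1 < q.2
    · simpa [F, hq] using norm_inner_le_norm (𝕜 := ℝ) (g q.1) (g q.2)
    · simp [F, hq, mul_nonneg]
  have hsplit : ∀ u ∈ Ioc s t, ∫ v in Ioc u t, g v = Δ - ∫ v in Ioc s u, g v := by
    intro u hu
    rw [eq_sub_iff_add_eq', ← setIntegral_union (Ioc_disjoint_Ioc_of_le le_rfl) measurableSet_Ioc
      (hg.mono_set (Ioc_subset_Ioc_right hu.2)) (hg.mono_set (Ioc_subset_Ioc_left hu.1.le)),
      Ioc_union_Ioc_eq_Ioc hu.1.le hu.2]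
  have h_upper : ∫ u, ∫ v, F (u, v) ∂μ ∂μ = ‖Δ‖ ^ 2 - ∫ u in Ioc s t, ⟪g u, ∫ v in Ioc s u, g v⟫ := by
    have : ∀ u ∈ Ioc s t, ∫ v, F (u, v) ∂μ = ⟪Δ, g u⟫ - ⟪g u, ∫ v in Ioc s u, g v⟫ := by
      intro u hu
      have hset : Ioi u ∩ Ioc s t = Ioc u t := by
        ext v; simp only [mem_inter_iff, mem_Ioi, mem_Ioc]; constructor <;> grind [hu.1]
      have : (fun v => F (u, v)) = (Ioi u).indicator fun v => ⟪g u, g v⟫ := by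
        ext v; by_cases h : u < v <;> simp [F, h]
      rw [this, integral_indicator measurableSet_Ioi, Measure.restrict_restrict measurableSet_Ioi,
        hset, integral_inner (hg.mono_set (Ioc_subset_Ioc_left hu.1.le)), hsplit u hu,
        inner_sub_right, real_inner_comm]
    rw [setIntegral_congr_fun measurableSet_Ioc this, integral_sub (hg.const_inner (𝕜 := ℝ) Δ)
      (integrableOn_inner_primitive hg), integral_inner hg, real_inner_self_eq_norm_sq]
  have h_lower : ∫ v, ∫ u, F (u, v) ∂μ ∂μ = ∫ v in Ioc s t, ⟪g v, ∫ u in Ioc s v, g u⟫ := by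
    refine setIntegral_congr_fun measurableSet_Ioc fun v hv => ?_
    have hset : Iio v ∩ Ioc s t = Ioo s v := by
      ext u; simp only [mem_inter_iff, mem_Iio, mem_Ioc, mem_Ioo]; constructor <;> grind [hv.2]
    have : (fun u => F (u, v)) = (Iio v).indicator fun u => ⟪g v, g u⟫ := by
      ext u; by_cases h : u < v <;> simp [F, h, real_inner_comm]
    rw [this, integral_indicator measurableSet_Iio, Measure.restrict_restrict measurableSet_Iio,
      hset, ← integral_Ioc_eq_integral_Ioo,
      integral_inner (hg.mono_set (Ioc_subset_Ioc_right hv.2))]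
  linarith [integral_integral_swap (f := fun u v => F (u, v)) hF, h_upper, h_lower]

theorem norm_sub_sq_eq_add_two_mul_integral_inner [CompleteSpace E] {φ : ℝ → E} (a : E)
    (hst : s ≤ t) (hg : IntegrableOn g (Ioc s t))
    (hφ : ∀ u ∈ Icc s t, φ u = φ s + ∫ v in Ioc s u, g v) :
    ‖φ t - a‖ ^ 2 = ‖φ s - a‖ ^ 2 + 2 * ∫ u in Ioc s t, ⟪g u, φ u - a⟫ := by
  have h_end : φ t - a = (φ s - a) + ∫ u in Ioc s t, g u := by
    rw [hφ t ⟨hst, le_rfl⟩]; abel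
  have h_split : ∫ u in Ioc s t, ⟪g u, φ u - a⟫
      = ⟪φ s - a, ∫ u in Ioc s t, g u⟫ + ∫ u in Ioc s t, ⟪g u, ∫ v in Ioc s u, g v⟫ := by
    rw [setIntegral_congr_fun measurableSet_Ioc fun u hu => by
        rw [hφ u (Ioc_subset_Icc_self hu), add_sub_right_comm, inner_add_right, real_inner_comm],
      integral_add (hg.const_inner (𝕜 := ℝ) _) (integrableOn_inner_primitive hg), integral_inner hg]
  rw [h_end, norm_add_sq_real, h_split, ← two_mul_integral_inner_primitive hg]
  ring

theorem norm_sub_le_of_ae_inner_nonpos [CompleteSpace E] {φ : ℝ → E} (a : E)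
    (hst : s ≤ t) (hg : IntegrableOn g (Ioc s t))
    (hφ : ∀ u ∈ Icc s t, φ u = φ s + ∫ v in Ioc s u, g v)
    (h_inner : ∀ᵐ u ∂volume.restrict (Ioc s t), ⟪g u, φ u - a⟫ ≤ 0) :
    ‖φ t - a‖ ≤ ‖φ s - a‖ := by
  have h_sq := norm_sub_sq_eq_add_two_mul_integral_inner a hst hg hφ
  have h_int := integral_nonpos_of_ae h_inner
  exact (pow_le_pow_iff_left₀ (norm_nonneg _) (norm_nonneg _) two_ne_zero).mp (by linarith)

end Primitive

theorem inner_sub_nonpos_of_neg_mem_subdiff {n : ℕ} {f : EuclideanSpace ℝ (Fin n) → ℝ}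
    {a x v : EuclideanSpace ℝ (Fin n)} (hv : -v ∈ subdiff f x) (ha : IsMinOn f univ a) :
    ⟪v, x - a⟫ ≤ 0 := by
  have h_sub := hv a
  have h_min : f a ≤ f x := ha (mem_univ x)
  rw [inner_neg_left, ← neg_sub x a, inner_neg_right, neg_neg] at h_sub
  linarith

theorem stmt19_general {n p : ℕ}
    (f : Fin p → EuclideanSpace ℝ (Fin n) → ℝ)
    (a : EuclideanSpace ℝ (Fin n))
    -- a ∈ A = ⋂_q argmin f_q
    (ha : ∀ q, IsMinOn (f q) univ a)
    (σ : ℝ → Fin p)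
    (φ φ' : ℝ → EuclideanSpace ℝ (Fin n))
    -- φ locally absolutely continuous with a.e. derivative φ'
    (hφint : ∀ T : ℝ, IntervalIntegrable φ' volume 0 T)
    (hφFTC : ∀ t ∈ Ici (0:ℝ), φ t = φ 0 + ∫ s in (0:ℝ)..t, φ' s)
    -- φ'(t) ∈ -∂f_{σ(t)}(φ(t)) a.e.
    (hincl : ∀ᵐ t ∂volume, t ∈ Ici (0:ℝ) → -φ' t ∈ subdiff (f (σ t)) (φ t)) :
    AntitoneOn (fun t => ‖φ t - a‖) (Ici 0) ∧
    ∀ t ∈ Ici (0:ℝ), ‖φ t - a‖ ≤ ‖φ 0 - a‖ := by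
  have key : ∀ s t : ℝ, 0 ≤ s → s ≤ t → ‖φ t - a‖ ≤ ‖φ s - a‖ := by
    intro s t hs hst
    refine norm_sub_le_of_ae_inner_nonpos a hst
      ((intervalIntegrable_iff_integrableOn_Ioc_of_le hst).mp ((hφint s).symm.trans (hφint t)))
      (fun u hu => ?_) ?_
    · rw [hφFTC u (hs.trans hu.1), hφFTC s hs, add_assoc, ← intervalIntegral.integral_of_le hu.1,
        intervalIntegral.integral_add_adjacent_intervals (hφint s)
          ((hφint s).symm.trans (hφint u))]
    · filter_upwards [ae_restrict_mem measurableSet_Ioc, ae_restrict_of_ae hincl] with u hu hincl_u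
      exact inner_sub_nonpos_of_neg_mem_subdiff (hincl_u (hs.trans hu.1.le)) (ha _)
  exact ⟨fun s hs t _ hst => key s t hs hst, fun t ht => key 0 t le_rfl ht⟩

theorem stmt19 {n p : ℕ}
    (f : Fin p → EuclideanSpace ℝ (Fin n) → ℝ)
    (hf : ∀ q, ConvexOn ℝ univ (f q))
    (a : EuclideanSpace ℝ (Fin n))
    -- a ∈ A = ⋂_q argmin f_q
    (ha : ∀ q, IsMinOn (f q) univ a)
    (σ : ℝ → Fin p)
    -- σ is a piecewise-constant switching signal
    (hσ : ∃ τ : ℕ → ℝ, τ 0 = 0 ∧ StrictMono τ ∧ Tendsto τ atTop atTop ∧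
          ∀ j : ℕ, ∀ s ∈ Ico (τ j) (τ (j+1)), σ s = σ (τ j))
    (φ φ' : ℝ → EuclideanSpace ℝ (Fin n))
    -- φ locally absolutely continuous with a.e. derivative φ'
    (hφint : ∀ T : ℝ, IntervalIntegrable φ' volume 0 T)
    (hφFTC : ∀ t ∈ Ici (0:ℝ), φ t = φ 0 + ∫ s in (0:ℝ)..t, φ' s)
    -- φ'(t) ∈ -∂f_{σ(t)}(φ(t)) a.e.
    (hincl : ∀ᵐ t ∂volume, t ∈ Ici (0:ℝ) → -φ' t ∈ subdiff (f (σ t)) (φ t)) :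
    AntitoneOn (fun t => ‖φ t - a‖) (Ici 0) ∧
    ∀ t ∈ Ici (0:ℝ), ‖φ t - a‖ ≤ ‖φ 0 - a‖ :=
  stmt19_general f a ha σ φ φ' hφint hφFTC hincl
end
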